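/- Let Ω ⊆ ℝ² be open, let g : ℝ → ℝ be continuously differentiable, set f(x) := g(x₁² + x₂²), and let u ∈ C²(Ω). Define the vector field C[u] : Ω → ℝ² by C[u]₁ := x₂((∂₁u)² − (∂₂u)²)/2 − x₁ ∂₁u ∂₂u + x₂ f u and C[u]₂ := x₁((∂₁u)² − (∂₂u)²)/2 + x₂ ∂₁u ∂₂u − x₁ f u. Then at every point of Ω, div(C[u]) = (x₂ ∂₁u − x₁ ∂₂u)(Δu + f). In particular, if u solves −Δu = f on Ω, then div(C[u]) = 0 at every point of Ω. -/

import Mathlib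

open MeasureTheory RealInnerProductSpace
open scoped BigOperators

noncomputable section

/-- `ℝ^d` as a Euclidean (inner product) space. -/
abbrev Euc (d : ℕ) := EuclideanSpace ℝ (Fin d)

/-- Divergence of a vector field on `ℝ^d`. -/
noncomputable def pdiv {d : ℕ} (F : Euc d → Euc d) (x : Euc d) : ℝ :=
  ∑ i, fderiv ℝ F x (EuclideanSpace.single i 1) i

/-- `x ↦ L(x, u(x), ∇u(x))`, the Lagrangian evaluated along `u`. -/
noncomputable def lagAlong {d : ℕ} (L : Euc d → ℝ → Euc d → ℝ) (u : Euc d → ℝ)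
    (x : Euc d) : ℝ :=
  L x (u x) (gradient u x)

/-- `L_u(x, u(x), ∇u(x))`, the partial derivative of `L` in its second argument
evaluated along `u`. -/
noncomputable def lagU {d : ℕ} (L : Euc d → ℝ → Euc d → ℝ) (u : Euc d → ℝ)
    (x : Euc d) : ℝ :=
  deriv (fun s => L x s (gradient u x)) (u x)

/-- `L_p(x, u(x), ∇u(x))`, the gradient of `L` in its third argument
evaluated along `u`. -/
noncomputable def lagP {d : ℕ} (L : Euc d → ℝ → Euc d → ℝ) (u : Euc d → ℝ)
    (x : Euc d) : Euc d :=
  gradient (fun p => L x (u x) p) (gradient u x)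

/-! The field is the Noether current `C = L ξ + Q ∇u` of `L(x, s, p) = ‖p‖²/2 - f x * s` for the
infinitesimal rotation `ξ(x) = A x`, `A = !![0, -1; 1, 0]`, with characteristic `Q = -⟪∇u, ξ⟫`.
For every `A` with `⟪A v, v⟫ = 0` the product rule gives `div C = Q (Δu + f) - u ∂_ξ f`:
`div ξ = tr A = 0`, the two Hessian terms `D²u(ξ, ∇u)` cancel by symmetry of second derivatives,
and `⟪∇u, A ∇u⟫ = 0`. Radial symmetry of `f` is exactly `∂_ξ f = 2 g'(‖x‖²) ⟪x, A x⟫ = 0`. -/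

open InnerProductSpace

section Divergence

variable {d : ℕ}

lemma HasFDerivAt.pdiv_eq {F : Euc d → Euc d} {F' : Euc d →L[ℝ] Euc d} {x : Euc d}
    (hF : HasFDerivAt F F' x) : pdiv F x = ∑ i, F' (EuclideanSpace.single i 1) i := by
  rw [pdiv, hF.fderiv]

lemma ContinuousLinearMap.sum_apply_single_mul (φ : Euc d →L[ℝ] ℝ) (v : Euc d) :
    ∑ i, φ (EuclideanSpace.single i 1) * v i = φ v := by
  conv_rhs => rw [← (EuclideanSpace.basisFun (Fin d) ℝ).sum_repr v]
  simp [mul_comm]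

lemma HasFDerivAt.pdiv_smul {φ : Euc d → ℝ} {φ' : Euc d →L[ℝ] ℝ} {F : Euc d → Euc d}
    {F' : Euc d →L[ℝ] Euc d} {x : Euc d} (hφ : HasFDerivAt φ φ' x) (hF : HasFDerivAt F F' x) :
    pdiv (fun y => φ y • F y) x = φ' (F x) + φ x * pdiv F x := by
  rw [(hφ.fun_smul hF).pdiv_eq, hF.pdiv_eq, ← φ'.sum_apply_single_mul, Finset.mul_sum,
    ← Finset.sum_add_distrib]
  simp [add_comm]

lemma pdiv_add {F G : Euc d → Euc d} {x : Euc d} (hF : DifferentiableAt ℝ F x)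
    (hG : DifferentiableAt ℝ G x) : pdiv (fun y => F y + G y) x = pdiv F x + pdiv G x := by
  rw [(hF.hasFDerivAt.fun_add hG.hasFDerivAt).pdiv_eq, pdiv, pdiv, ← Finset.sum_add_distrib]
  simp

lemma ContinuousLinearMap.pdiv_eq_zero_of_forall_inner_self {A : Euc d →L[ℝ] Euc d}
    (hA : ∀ v, ⟪A v, v⟫ = 0) (x : Euc d) : pdiv A x = 0 := by
  rw [A.hasFDerivAt.pdiv_eq]
  refine Finset.sum_eq_zero fun i _ => ?_
  simpa [EuclideanSpace.inner_single_right] using hA (EuclideanSpace.single i 1)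

lemma ContDiffAt.hasFDerivAt_gradient {u : Euc d → ℝ} {x : Euc d} (hu : ContDiffAt ℝ 2 u x) :
    ∃ G' : Euc d →L[ℝ] Euc d, HasFDerivAt (gradient u) G' x ∧
      ∀ v w, ⟪G' v, w⟫ = fderiv ℝ (fderiv ℝ u) x v w := by
  have hD : HasFDerivAt (fderiv ℝ u) (fderiv ℝ (fderiv ℝ u) x) x :=
    ((hu.fderiv_right (m := 1) le_rfl).differentiableAt one_ne_zero).hasFDerivAt
  let J := (toDual ℝ (Euc d)).symm.toLinearIsometry.toContinuousLinearMap
  exact ⟨J.comp (fderiv ℝ (fderiv ℝ u) x), J.hasFDerivAt.comp x hD, fun _ _ => toDual_symm_apply⟩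

end Divergence

section Noether

variable {d : ℕ}

def laplaceLagrangian (f : Euc d → ℝ) : Euc d → ℝ → Euc d → ℝ :=
  fun x s p => ‖p‖ ^ 2 / 2 - f x * s

def noetherCharacteristic (u : Euc d → ℝ) (A : Euc d →L[ℝ] Euc d) (x : Euc d) : ℝ :=
  -⟪gradient u x, A x⟫

def noetherCurrent (L : Euc d → ℝ → Euc d → ℝ) (u : Euc d → ℝ) (A : Euc d →L[ℝ] Euc d)
    (x : Euc d) : Euc d :=
  lagAlong L u x • A x + noetherCharacteristic u A x • gradient u x

lemma HasFDerivAt.lagAlong_laplaceLagrangian {f u : Euc d → ℝ} {G' : Euc d →L[ℝ] Euc d}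
    {x : Euc d} (hG : HasFDerivAt (gradient u) G' x) (hu : DifferentiableAt ℝ u x)
    (hf : DifferentiableAt ℝ f x) :
    HasFDerivAt (lagAlong (laplaceLagrangian f) u)
      ((innerSL ℝ (gradient u x)).comp G' - f x • fderiv ℝ u x - u x • fderiv ℝ f x) x := by
  have e : lagAlong (laplaceLagrangian f) u
      = fun y => ‖gradient u y‖ ^ 2 * 2⁻¹ - f y * u y := by
    funext y
    simp only [lagAlong, laplaceLagrangian, div_eq_mul_inv]
  rw [e]
  refine ((hG.norm_sq.mul_const 2⁻¹).fun_sub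
    (hf.hasFDerivAt.fun_mul hu.hasFDerivAt)).congr_fderiv ?_
  ext v
  simp only [sub_apply, add_apply, smul_apply, ContinuousLinearMap.comp_apply, coe_innerSL_apply,
    inner_gradient_left, smul_eq_mul]
  ring

lemma HasFDerivAt.noetherCharacteristic {u : Euc d → ℝ} {G' : Euc d →L[ℝ] Euc d}
    {x : Euc d} (hG : HasFDerivAt (gradient u) G' x) (A : Euc d →L[ℝ] Euc d) :
    HasFDerivAt (noetherCharacteristic u A)
      (-((innerSL ℝ (A x)).comp G' + (innerSL ℝ (gradient u x)).comp A)) x := by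
  refine (HasFDerivAt.inner ℝ hG A.hasFDerivAt).neg.congr_fderiv ?_
  ext v
  simp [real_inner_comm, add_comm]

theorem pdiv_noetherCurrent_laplaceLagrangian {f u : Euc d → ℝ} {A : Euc d →L[ℝ] Euc d}
    {x : Euc d} (hu : ContDiffAt ℝ 2 u x) (hf : DifferentiableAt ℝ f x)
    (hA : ∀ v, ⟪A v, v⟫ = 0) :
    pdiv (noetherCurrent (laplaceLagrangian f) u A) x
      = noetherCharacteristic u A x * (pdiv (gradient u) x + f x)
        - u x * fderiv ℝ f x (A x) := by
  obtain ⟨G', hG, hG'⟩ := hu.hasFDerivAt_gradient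
  have hsymm : ∀ v w, fderiv ℝ (fderiv ℝ u) x v w = fderiv ℝ (fderiv ℝ u) x w v :=
    hu.isSymmSndFDerivAt (by simp)
  have hL := hG.lagAlong_laplaceLagrangian (hu.differentiableAt (by simp)) hf
  have hQ := hG.noetherCharacteristic A
  unfold noetherCurrent
  rw [pdiv_add (hL.fun_smul A.hasFDerivAt).differentiableAt
    (hQ.fun_smul hG).differentiableAt, hL.pdiv_smul A.hasFDerivAt, hQ.pdiv_smul hG,
    A.pdiv_eq_zero_of_forall_inner_self hA]
  have hHess : ⟪gradient u x, G' (A x)⟫ = ⟪A x, G' (gradient u x)⟫ := by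
    rw [real_inner_comm, hG', hsymm, ← hG', real_inner_comm]
  have hRot : ⟪gradient u x, A (gradient u x)⟫ = 0 := by rw [real_inner_comm, hA]
  simp only [sub_apply, add_apply, neg_apply, smul_apply,
    ContinuousLinearMap.comp_apply, innerSL_apply_apply, smul_eq_mul, mul_zero, add_zero]
  rw [hHess, hRot, ← inner_gradient_left, noetherCharacteristic]
  ring

end Noether

lemma HasDerivAt.fderiv_comp_norm_sq_apply_eq_zero {E : Type*} [NormedAddCommGroup E]
    [InnerProductSpace ℝ E] {g : ℝ → ℝ} {g' : ℝ} {x : E} (hg : HasDerivAt g g' (‖x‖ ^ 2))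
    {A : E →L[ℝ] E} (hA : ∀ v, ⟪A v, v⟫ = 0) :
    fderiv ℝ (fun y => g (‖y‖ ^ 2)) x (A x) = 0 := by
  have h : HasFDerivAt (fun y => g (‖y‖ ^ 2)) (g' • 2 • innerSL ℝ x) x :=
    hg.comp_hasFDerivAt x (hasStrictFDerivAt_norm_sq x).hasFDerivAt
  have hx : ⟪x, A x⟫ = 0 := by rw [real_inner_comm, hA]
  simp [h.fderiv, hx]

def rotationGenerator : Euc 2 →L[ℝ] Euc 2 :=
  Matrix.toEuclideanCLM (𝕜 := ℝ) !![0, -1; 1, 0]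

lemma rotationGenerator_apply (x : Euc 2) : rotationGenerator x = !₂[-x 1, x 0] := by
  ext i
  fin_cases i <;> simp [rotationGenerator, Matrix.vecHead, Matrix.vecTail]

lemma inner_rotationGenerator_self (v : Euc 2) : ⟪rotationGenerator v, v⟫ = 0 := by
  simp [rotationGenerator_apply, PiLp.inner_apply, Fin.sum_univ_two, mul_comm]

lemma noetherCharacteristic_rotationGenerator (u : Euc 2 → ℝ) (x : Euc 2) :
    noetherCharacteristic u rotationGenerator x = x 1 * gradient u x 0 - x 0 * gradient u x 1 := by
  rw [noetherCharacteristic, rotationGenerator_apply, PiLp.inner_apply, Fin.sum_univ_two]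
  simp only [Matrix.cons_val_zero, Matrix.cons_val_one, Matrix.cons_val_fin_one, RCLike.inner_apply,
    Real.ringHom_apply]
  ring

lemma noetherCurrent_laplaceLagrangian_rotationGenerator (f u : Euc 2 → ℝ) (x : Euc 2) :
    noetherCurrent (laplaceLagrangian f) u rotationGenerator x =
      EuclideanSpace.single 0
        (x 1 * ((gradient u x 0) ^ 2 - (gradient u x 1) ^ 2) / 2
          - x 0 * gradient u x 0 * gradient u x 1 + x 1 * f x * u x)
      + EuclideanSpace.single 1
        (x 0 * ((gradient u x 0) ^ 2 - (gradient u x 1) ^ 2) / 2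
          + x 1 * gradient u x 0 * gradient u x 1 - x 0 * f x * u x) := by
  ext i
  fin_cases i <;>
    simp [noetherCurrent, noetherCharacteristic_rotationGenerator, lagAlong, laplaceLagrangian,
      rotationGenerator_apply, EuclideanSpace.norm_sq_eq, Fin.sum_univ_two] <;>
    ring

/-- Noether conservation law for Laplace's problem in `d = 2`:
for radially symmetric data `f(x) = g(x₁² + x₂²)` the rotational Noether current
`C[u]` satisfies `div C[u] = (x₂ ∂₁u − x₁ ∂₂u)(Δu + f)` on `Ω`; in particular it is
divergence-free over solutions of `−Δu = f`. -/
theorem noether_law_laplace_rotations (Ω : Set (Euc 2)) (hΩ : IsOpen Ω)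
    (g : ℝ → ℝ) (hg : ContDiff ℝ 1 g)
    (f : Euc 2 → ℝ) (hf : ∀ x, f x = g ((x 0) ^ 2 + (x 1) ^ 2))
    (u : Euc 2 → ℝ) (hu : ContDiffOn ℝ 2 u Ω)
    (C : Euc 2 → Euc 2)
    (hC : ∀ x, C x =
      EuclideanSpace.single 0
        (x 1 * ((gradient u x 0) ^ 2 - (gradient u x 1) ^ 2) / 2
          - x 0 * gradient u x 0 * gradient u x 1 + x 1 * f x * u x)
      + EuclideanSpace.single 1
        (x 0 * ((gradient u x 0) ^ 2 - (gradient u x 1) ^ 2) / 2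
          + x 1 * gradient u x 0 * gradient u x 1 - x 0 * f x * u x)) :
    (∀ x ∈ Ω, pdiv C x
        = (x 1 * gradient u x 0 - x 0 * gradient u x 1)
            * (pdiv (fun y => gradient u y) x + f x))
    ∧ ((∀ x ∈ Ω, -(pdiv (fun y => gradient u y) x) = f x) →
        ∀ x ∈ Ω, pdiv C x = 0) := by
  have hf_radial : f = fun y => g (‖y‖ ^ 2) := by
    funext y
    simp [hf, EuclideanSpace.norm_sq_eq, Fin.sum_univ_two]
  have hC_current : C = noetherCurrent (laplaceLagrangian f) u rotationGenerator := by
    funext y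
    rw [hC, noetherCurrent_laplaceLagrangian_rotationGenerator]
  have hg' : ∀ r, HasDerivAt g (deriv g r) r :=
    fun r => ((hg.differentiable one_ne_zero) r).hasDerivAt
  have hdiv : ∀ x ∈ Ω, pdiv C x
      = (x 1 * gradient u x 0 - x 0 * gradient u x 1)
          * (pdiv (fun y => gradient u y) x + f x) := by
    intro x hx
    have hfx : DifferentiableAt ℝ f x := by
      rw [hf_radial]
      exact ((hg' _).comp_hasFDerivAt x (hasStrictFDerivAt_norm_sq x).hasFDerivAt).differentiableAt
    have hrot : fderiv ℝ f x (rotationGenerator x) = 0 := by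
      rw [hf_radial]
      exact (hg' _).fderiv_comp_norm_sq_apply_eq_zero inner_rotationGenerator_self
    rw [hC_current, pdiv_noetherCurrent_laplaceLagrangian (hu.contDiffAt (hΩ.mem_nhds hx)) hfx
      inner_rotationGenerator_self, hrot, mul_zero, sub_zero,
      noetherCharacteristic_rotationGenerator]
  refine ⟨hdiv, fun hsol x hx => ?_⟩
  rw [hdiv x hx, ← hsol x hx, add_neg_cancel, mul_zero]
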